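/- arXiv:gr-qc/0504118 — 5 statements merged into one kernel-verified Lean document; each statement's English description precedes it below -/
import Mathlib

section
/- Let d ≥ 2 be an integer, let a ≤ b in ℝ, and let f : ℝ → (Fin d → ℝ) be well-parametrized on [a,b] via v. If there exist x ∈ Set.Icc a b and an index i with 1 ≤ i ≤ d−1 such that f x i ≠ f a i (the space component of f is not constant equal to that of f a), then b − a < |f b 0 − f a 0|. -/
/-- A vector `v : Fin (d+2) → ℝ` is Minkowski-unit if
`(v 0)^2 − ((v 1)^2 + ⋯ + (v (d+1))^2) = 1`. -/
def MinkUnit {d : ℕ} (v : Fin (d + 2) → ℝ) : Prop :=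
  (v 0) ^ 2 - ∑ i ∈ Finset.univ.erase (0 : Fin (d + 2)), (v i) ^ 2 = 1

/-- `f` is well-parametrized on `[a,b]` via `v`: at every `x ∈ [a,b]`, `f` has
derivative `v x` at `x` within `[a,b]`, and `v x` is Minkowski-unit. -/
def WellParam {d : ℕ} (a b : ℝ) (f v : ℝ → Fin (d + 2) → ℝ) : Prop :=
  ∀ x ∈ Set.Icc a b, HasDerivWithinAt f (v x) (Set.Icc a b) x ∧ MinkUnit (v x)

/-- Auxiliary: if `g' = w ≥ 1` on `[a,b]` and `w x₁ > 1` at some point, then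
`g b - g a > b - a`. -/
lemma aux_strict {a b : ℝ} (hab : a < b) {g w : ℝ → ℝ}
    (hg : ∀ x ∈ Set.Icc a b, HasDerivWithinAt g (w x) (Set.Icc a b) x)
    (h1 : ∀ x ∈ Set.Icc a b, 1 ≤ w x)
    {x₁ : ℝ} (hx₁ : x₁ ∈ Set.Icc a b) (h2 : 1 < w x₁) :
    b - a < g b - g a := by
  set h : ℝ → ℝ := fun x => g x - x with hh
  have hderiv : ∀ x ∈ Set.Icc a b, HasDerivWithinAt h (w x - 1) (Set.Icc a b) x := by
    intro x hx
    exact (hg x hx).sub (hasDerivWithinAt_id x _)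
  have hmono : MonotoneOn h (Set.Icc a b) := by
    apply monotoneOn_of_hasDerivWithinAt_nonneg (f' := fun x => w x - 1) (convex_Icc a b)
    · exact fun x hx => ((hderiv x hx).continuousWithinAt)
    · intro x hx
      rw [interior_Icc] at hx ⊢
      exact (hderiv x (Set.Ioo_subset_Icc_self hx)).mono Set.Ioo_subset_Icc_self
    · intro x hx
      rw [interior_Icc] at hx
      have := h1 x (Set.Ioo_subset_Icc_self hx)
      linarith
  have hmem_a : a ∈ Set.Icc a b := Set.left_mem_Icc.2 hab.le
  have hmem_b : b ∈ Set.Icc a b := Set.right_mem_Icc.2 hab.le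
  have hle : h a ≤ h b := hmono hmem_a hmem_b hab.le
  rcases hle.lt_or_eq with hlt | heq
  · simp only [hh] at hlt; linarith
  · exfalso
    -- h is constant on [a,b]
    have hconst : ∀ x ∈ Set.Icc a b, h x = h a := by
      intro x hx
      have h1' := hmono hmem_a hx hx.1
      have h2' := hmono hx hmem_b hx.2
      linarith [heq]
    have hud : UniqueDiffWithinAt ℝ (Set.Icc a b) x₁ := uniqueDiffOn_Icc hab x₁ hx₁
    have hzero : HasDerivWithinAt h 0 (Set.Icc a b) x₁ := by
      have : HasDerivWithinAt (fun _ : ℝ => h a) 0 (Set.Icc a b) x₁ :=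
        hasDerivWithinAt_const _ _ _
      exact this.congr (fun y hy => hconst y hy) (hconst x₁ hx₁)
    have e1 : derivWithin h (Set.Icc a b) x₁ = 0 := hzero.derivWithin hud
    have e2 : derivWithin h (Set.Icc a b) x₁ = w x₁ - 1 :=
      (hderiv x₁ hx₁).derivWithin hud
    rw [e1] at e2
    linarith

theorem time_component_strictly_dominates {d : ℕ} {a b : ℝ} (hab : a ≤ b)
    (f v : ℝ → Fin (d + 2) → ℝ) (hf : WellParam a b f v)
    (hmove : ∃ x ∈ Set.Icc a b, ∃ i : Fin (d + 2), 1 ≤ (i : ℕ) ∧ f x i ≠ f a i) :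
    b - a < |f b 0 - f a 0| := by
  classical
  obtain ⟨x₀, hx₀, i, hi1, hmove⟩ := hmove
  have hab' : a < b := by
    rcases hab.lt_or_eq with h | rfl
    · exact h
    · exact absurd (by rw [le_antisymm hx₀.2 hx₀.1]) hmove
  have hi0 : i ≠ 0 := by
    intro h
    rw [h] at hi1
    simp at hi1
  have hcomp : ∀ (j : Fin (d + 2)), ∀ x ∈ Set.Icc a b,
      HasDerivWithinAt (fun y => f y j) (v x j) (Set.Icc a b) x :=
    fun j x hx => hasDerivWithinAt_pi.1 (hf x hx).1 j
  have hsq : ∀ x ∈ Set.Icc a b, ∀ j : Fin (d + 2), j ≠ 0 → 1 + (v x j) ^ 2 ≤ (v x 0) ^ 2 := by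
    intro x hx j hj
    have hm := (hf x hx).2
    unfold MinkUnit at hm
    have hle : (v x j) ^ 2 ≤ ∑ k ∈ Finset.univ.erase (0 : Fin (d + 2)), (v x k) ^ 2 :=
      Finset.single_le_sum (f := fun k => (v x k) ^ 2) (fun k _ => sq_nonneg _)
        (Finset.mem_erase.2 ⟨hj, Finset.mem_univ _⟩)
    linarith
  have hone : ∀ x ∈ Set.Icc a b, 1 ≤ (v x 0) ^ 2 := by
    intro x hx
    have h1ne : (1 : Fin (d + 2)) ≠ 0 := by
      simp [Fin.ext_iff]
    have := hsq x hx 1 h1ne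
    nlinarith [sq_nonneg (v x 1)]
  have hne : ∀ x ∈ Set.Icc a b, v x 0 ≠ 0 := by
    intro x hx h
    have := hone x hx
    rw [h] at this
    norm_num at this
  -- there is a point where v x i ≠ 0
  have hx1 : ∃ x₁ ∈ Set.Icc a b, v x₁ i ≠ 0 := by
    by_contra h
    push_neg at h
    apply hmove
    have hbound : ∀ x ∈ Set.Icc a b, ‖v x i‖ ≤ 0 := by
      intro x hx; simp [h x hx]
    have := (convex_Icc a b).norm_image_sub_le_of_norm_hasDerivWithin_le
      (hcomp i) hbound (Set.left_mem_Icc.2 hab) hx₀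
    simp only [zero_mul, norm_le_zero_iff, sub_eq_zero] at this
    exact this
  obtain ⟨x₁, hx₁, hvi⟩ := hx1
  have hsq1 : 1 < (v x₁ 0) ^ 2 := by
    have h' := hsq x₁ hx₁ i hi0
    have hp : 0 < (v x₁ i) ^ 2 := by positivity
    linarith
  rcases hasDerivWithinAt_forall_lt_or_forall_gt_of_forall_ne (convex_Icc a b)
      (hcomp 0) (m := 0) hne with hneg | hpos
  · -- v x 0 ≤ -1 everywhere; use -f
    have h1 : ∀ x ∈ Set.Icc a b, 1 ≤ -(v x 0) := by
      intro x hx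
      have := hone x hx
      have := hneg x hx
      nlinarith
    have h2 : 1 < -(v x₁ 0) := by
      have := hneg x₁ hx₁
      nlinarith
    have hthis : b - a < -(f b 0) - -(f a 0) := aux_strict hab' (g := fun y => -(f y 0)) (w := fun x => -(v x 0))
      (fun x hx => (hcomp 0 x hx).neg) h1 hx₁ h2
    have hb : -(f b 0) - -(f a 0) ≤ |f b 0 - f a 0| := by
      rw [abs_sub_comm]
      calc -(f b 0) - -(f a 0) = f a 0 - f b 0 := by ring
        _ ≤ |f a 0 - f b 0| := le_abs_self _
    linarith
  · have h1 : ∀ x ∈ Set.Icc a b, 1 ≤ v x 0 := by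
      intro x hx
      have := hone x hx
      have := hpos x hx
      nlinarith
    have h2 : 1 < v x₁ 0 := by
      have := hpos x₁ hx₁
      nlinarith
    have := aux_strict hab' (hcomp 0 ·) h1 hx₁ h2
    calc b - a < f b 0 - f a 0 := this
      _ ≤ |f b 0 - f a 0| := le_abs_self _
end

section
/- Let d ≥ 2 be an integer, let a ≤ b and a' ≤ b' in ℝ, let f : ℝ → (Fin d → ℝ) be well-parametrized on [a,b] via v, and let g : ℝ → (Fin d → ℝ) be well-parametrized on [a',b'] via w. If the images coincide, i.e. f '' (Set.Icc a b) = g '' (Set.Icc a' b'), then b − a = b' − a'. -/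
/-!
Since `v x` is Minkowski-unit, the time derivative `v x 0` never vanishes, so by Darboux the time
coordinate is strictly monotone along each curve; after reversing a curve if needed it increases.
Both curves are then injective, so `f = g ∘ φ` for a strictly increasing bijection
`φ : [a, b] → [a', b']`, which is continuous and, away from the endpoints, differentiable because
the time coordinates are. The chain rule gives `v x = φ' x • w (φ x)`, and comparing Minkowski norms
forces `φ' = 1`; the mean value theorem then yields `b' - a' = φ b - φ a = b - a`.
-/

open Set Filter Topology

theorem Set.InjOn.exists_bijOn_comp_eq {α β γ : Type*} [Nonempty β] {f : α → γ} {g : β → γ}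
    {s : Set α} {t : Set β} (hf : InjOn f s) (hg : InjOn g t) (h : f '' s = g '' t) :
    ∃ φ : α → β, BijOn φ s t ∧ EqOn (g ∘ φ) f s := by
  have hg' : BijOn (Function.invFunOn g t) (g '' t) t :=
    hg.bijOn_image.symm hg.bijOn_image.invOn_invFunOn.symm
  refine ⟨Function.invFunOn g t ∘ f, hg'.comp (h ▸ hf.bijOn_image), fun x hx => ?_⟩
  exact Function.invFunOn_eq (h ▸ mem_image_of_mem f hx : f x ∈ g '' t)

theorem MonotoneOn.apply_endpoints_of_bijOn_Icc {α β : Type*} [PartialOrder α] [PartialOrder β]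
    {φ : α → β} {a b : α} {a' b' : β} (hab : a ≤ b)
    (hab' : a' ≤ b') (hmono : MonotoneOn φ (Icc a b)) (hφ : BijOn φ (Icc a b) (Icc a' b')) :
    φ a = a' ∧ φ b = b' := by
  obtain ⟨x, hx, hxa⟩ := hφ.surjOn (left_mem_Icc.2 hab')
  obtain ⟨y, hy, hyb⟩ := hφ.surjOn (right_mem_Icc.2 hab')
  have ha := hφ.mapsTo (left_mem_Icc.2 hab)
  have hb := hφ.mapsTo (right_mem_Icc.2 hab)
  exact ⟨le_antisymm (hxa ▸ hmono (left_mem_Icc.2 hab) hx hx.1) ha.1,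
    le_antisymm hb.2 (hyb ▸ hmono hy (right_mem_Icc.2 hab) hy.2)⟩

theorem StrictMonoOn.mapsTo_Ioo_of_apply_endpoints {α β : Type*} [Preorder α] [Preorder β]
    {φ : α → β} {a b : α} {a' b' : β}
    (hmono : StrictMonoOn φ (Icc a b)) (ha : φ a = a') (hb : φ b = b') :
    MapsTo φ (Ioo a b) (Ioo a' b') := fun _ hx =>
  have hab : a ≤ b := (hx.1.trans hx.2).le
  ⟨ha ▸ hmono (left_mem_Icc.2 hab) (Ioo_subset_Icc_self hx) hx.1,
    hb ▸ hmono (Ioo_subset_Icc_self hx) (right_mem_Icc.2 hab) hx.2⟩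

theorem MonotoneOn.continuousOn_of_bijOn_Icc {α β : Type*} [LinearOrder α] [TopologicalSpace α]
    [OrderTopology α] [LinearOrder β] [TopologicalSpace β] [OrderTopology β] [DenselyOrdered β]
    {φ : α → β} {a b : α} {a' b' : β}
    (hmono : MonotoneOn φ (Icc a b)) (hφ : BijOn φ (Icc a b) (Icc a' b')) :
    ContinuousOn φ (Icc a b) := by
  have hcont : Continuous (hφ.mapsTo.restrict φ (Icc a b) (Icc a' b')) :=
    Monotone.continuous_of_surjective (fun x y hxy => hmono x.2 y.2 hxy)
      (hφ.mapsTo.restrict_surjective_iff.2 hφ.surjOn)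
  rw [continuousOn_iff_continuous_domRestrict]
  exact continuous_subtype_val.comp hcont

/-- The derivative of `φ` is read off from `h ∘ φ = k` through slopes:
`slope φ x z = slope k x z / slope h (φ x) (φ z)`. -/
theorem HasDerivAt.of_comp_eq {𝕜 : Type*} [NontriviallyNormedField 𝕜] {φ h k : 𝕜 → 𝕜}
    {x h' k' : 𝕜}
    (hh : HasDerivAt h h' (φ x)) (hk : HasDerivAt k k' x) (hh' : h' ≠ 0)
    (hφ : ContinuousAt φ x) (hφx : ∀ᶠ z in 𝓝[≠] x, φ z ≠ φ x)
    (hcomp : ∀ᶠ z in 𝓝 x, h (φ z) = k z) : HasDerivAt φ (k' / h') x := by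
  rw [hasDerivAt_iff_tendsto_slope] at hh hk ⊢
  have hφ' : Tendsto φ (𝓝[≠] x) (𝓝[≠] φ x) :=
    tendsto_nhdsWithin_iff.2 ⟨hφ.tendsto.mono_left nhdsWithin_le_nhds, hφx⟩
  refine (hk.div (hh.comp hφ') hh').congr' ?_
  filter_upwards [hφx, nhdsWithin_le_nhds hcomp, self_mem_nhdsWithin,
    (hh.comp hφ').eventually_ne hh'] with z hφz hcz hzx hslope
  have hz : z - x ≠ 0 := sub_ne_zero.2 hzx
  have hφz : φ z - φ x ≠ 0 := sub_ne_zero.2 hφz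
  simp only [Pi.div_apply, Function.comp_apply, slope_def_field, hcz, hcomp.self_of_nhds]
    at hslope ⊢
  have hkz : k z - k x ≠ 0 := fun h0 => hslope (by rw [h0, zero_div])
  field_simp

namespace MinkUnit

variable {d : ℕ} {v w : Fin (d + 2) → ℝ}

theorem one_le_sq_time (h : MinkUnit v) : 1 ≤ v 0 ^ 2 := by
  have hs : 0 ≤ ∑ i ∈ Finset.univ.erase (0 : Fin (d + 2)), v i ^ 2 :=
    Finset.sum_nonneg fun i _ => sq_nonneg _
  unfold MinkUnit at h
  linarith

theorem time_ne_zero (h : MinkUnit v) : v 0 ≠ 0 := fun h0 =>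
  absurd h.one_le_sq_time (by rw [h0]; norm_num)

theorem neg (h : MinkUnit v) : MinkUnit (-v) := by
  unfold MinkUnit at h ⊢
  simpa using h

theorem sq_eq_one_of_smul {c : ℝ} (hw : MinkUnit w) (hcw : MinkUnit (c • w)) : c ^ 2 = 1 := by
  unfold MinkUnit at hw hcw
  simp only [Pi.smul_apply, smul_eq_mul, mul_pow, ← Finset.mul_sum, ← mul_sub, hw] at hcw
  simpa using hcw

end MinkUnit

namespace WellParam

variable {d : ℕ} {a b : ℝ} {f v : ℝ → Fin (d + 2) → ℝ}

theorem hasDerivWithinAt_time (hf : WellParam a b f v) {x : ℝ} (hx : x ∈ Icc a b) :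
    HasDerivWithinAt (fun z => f z 0) (v x 0) (Icc a b) x :=
  hasDerivWithinAt_pi.1 (hf x hx).1 0

theorem continuousOn_time (hf : WellParam a b f v) : ContinuousOn (fun z => f z 0) (Icc a b) :=
  fun _ hx => (hf.hasDerivWithinAt_time hx).continuousWithinAt

theorem hasDerivAt (hf : WellParam a b f v) {x : ℝ} (hx : x ∈ Ioo a b) : HasDerivAt f (v x) x :=
  (hf x (Ioo_subset_Icc_self hx)).1.hasDerivAt (Icc_mem_nhds hx.1 hx.2)

theorem hasDerivAt_time (hf : WellParam a b f v) {x : ℝ} (hx : x ∈ Ioo a b) :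
    HasDerivAt (fun z => f z 0) (v x 0) x :=
  hasDerivAt_pi.1 (hf.hasDerivAt hx) 0

theorem strictMonoOn_time_or_strictAntiOn_time (hf : WellParam a b f v) :
    StrictMonoOn (fun x => f x 0) (Icc a b) ∨ StrictAntiOn (fun x => f x 0) (Icc a b) := by
  have hderiv : ∀ x ∈ interior (Icc a b),
      HasDerivWithinAt (fun z => f z 0) (v x 0) (interior (Icc a b)) x := by
    rw [interior_Icc]
    exact fun x hx => (hf.hasDerivAt_time hx).hasDerivWithinAt
  rcases hasDerivWithinAt_forall_lt_or_forall_gt_of_forall_ne (convex_Icc a b)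
    (fun x hx => hf.hasDerivWithinAt_time hx) (fun x hx => (hf x hx).2.time_ne_zero)
    with hneg | hpos
  · exact .inr <| strictAntiOn_of_hasDerivWithinAt_neg (convex_Icc a b) hf.continuousOn_time
      hderiv fun x hx => hneg x (interior_subset hx)
  · exact .inl <| strictMonoOn_of_hasDerivWithinAt_pos (convex_Icc a b) hf.continuousOn_time
      hderiv fun x hx => hpos x (interior_subset hx)

theorem comp_reflect (hf : WellParam a b f v) :
    WellParam a b (fun x => f (a + b - x)) (fun x => -v (a + b - x)) := by
  have hreflect : MapsTo (fun x => a + b - x) (Icc a b) (Icc a b) :=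
    fun x hx => ⟨by linarith [hx.2], by linarith [hx.1]⟩
  intro x hx
  refine ⟨?_, (hf _ (hreflect hx)).2.neg⟩
  have h := (hf _ (hreflect hx)).1.scomp x
    ((hasDerivAt_id x).const_sub (a + b)).hasDerivWithinAt hreflect
  simpa [Function.comp_def] using h

theorem exists_strictMonoOn_time (hf : WellParam a b f v) :
    ∃ F V : ℝ → Fin (d + 2) → ℝ, WellParam a b F V ∧ F '' Icc a b = f '' Icc a b ∧
      StrictMonoOn (fun x => F x 0) (Icc a b) := by
  rcases hf.strictMonoOn_time_or_strictAntiOn_time with hmono | hanti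
  · exact ⟨f, v, hf, rfl, hmono⟩
  · have hreflect : (fun x => a + b - x) '' Icc a b = Icc a b := by simp
    refine ⟨_, _, hf.comp_reflect, by rw [← image_image f (fun x => a + b - x), hreflect], ?_⟩
    exact hanti.comp (fun x _ y _ hxy => by simpa using hxy)
      (mapsTo_iff_image_subset.2 hreflect.le)

end WellParam

theorem WellParam.hasDerivAt_eq_one_of_comp_eq {d : ℕ} {a b a' b' : ℝ}
    {f v g w : ℝ → Fin (d + 2) → ℝ} {φ : ℝ → ℝ} (hf : WellParam a b f v)
    (hg : WellParam a' b' g w) (hφ : StrictMonoOn φ (Icc a b)) (hφc : ContinuousOn φ (Icc a b))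
    (hfg : EqOn (g ∘ φ) f (Icc a b)) {x : ℝ} (hx : x ∈ Ioo a b) (hφx : φ x ∈ Ioo a' b') :
    HasDerivAt φ 1 x := by
  have hnhds : Icc a b ∈ 𝓝 x := Icc_mem_nhds hx.1 hx.2
  have hcomp : g ∘ φ =ᶠ[𝓝 x] f := eventuallyEq_of_mem hnhds hfg
  have hφne : ∀ᶠ z in 𝓝[≠] x, φ z ≠ φ x := by
    filter_upwards [mem_nhdsWithin_of_mem_nhds hnhds, self_mem_nhdsWithin] with z hz hzx
    exact fun h => hzx (hφ.injOn hz (Ioo_subset_Icc_self hx) h)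
  have hderiv : HasDerivAt φ (v x 0 / w (φ x) 0) x :=
    (hg.hasDerivAt_time hφx).of_comp_eq (hf.hasDerivAt_time hx)
      (hg _ (Ioo_subset_Icc_self hφx)).2.time_ne_zero (hφc.continuousAt hnhds) hφne
      (hcomp.mono fun z hz => congrFun hz 0)
  set c := v x 0 / w (φ x) 0
  have hv : v x = c • w (φ x) := (hf.hasDerivAt hx).unique
    (((hg.hasDerivAt hφx).scomp x hderiv).congr_of_eventuallyEq hcomp.symm)
  have hc2 : c ^ 2 = 1 :=
    (hg _ (Ioo_subset_Icc_self hφx)).2.sq_eq_one_of_smul (hv ▸ (hf x (Ioo_subset_Icc_self hx)).2)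
  have hacc : AccPt x (𝓟 (Icc a b)) :=
    accPt_iff_frequently_nhdsNE.2 (eventually_nhdsWithin_of_eventually_nhds hnhds).frequently
  have hc0 : 0 ≤ c := hderiv.hasDerivWithinAt.nonneg_of_monotoneOn hacc hφ.monotoneOn
  rwa [← (pow_eq_one_iff_of_nonneg hc0 two_ne_zero).1 hc2]

theorem equal_images_equal_param_lengths {d : ℕ} {a b a' b' : ℝ}
    (hab : a ≤ b) (hab' : a' ≤ b')
    (f v g w : ℝ → Fin (d + 2) → ℝ)
    (hf : WellParam a b f v) (hg : WellParam a' b' g w)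
    (himg : f '' Set.Icc a b = g '' Set.Icc a' b') :
    b - a = b' - a' := by
  obtain ⟨F, V, hF, hFimg, hFmono⟩ := hf.exists_strictMonoOn_time
  obtain ⟨G, W, hG, hGimg, hGmono⟩ := hg.exists_strictMonoOn_time
  have hFinj : InjOn F (Icc a b) := InjOn.of_comp (g := fun p => p 0) hFmono.injOn
  have hGinj : InjOn G (Icc a' b') := InjOn.of_comp (g := fun p => p 0) hGmono.injOn
  obtain ⟨φ, hφ, hGφ⟩ := hFinj.exists_bijOn_comp_eq hGinj (by rw [hFimg, hGimg, himg])
  have hφmono : StrictMonoOn φ (Icc a b) := fun x hx y hy hxy =>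
    (hGmono.lt_iff_lt (hφ.mapsTo hx) (hφ.mapsTo hy)).1
      (by simpa only [← hGφ hx, ← hGφ hy, Function.comp_apply] using hFmono hx hy hxy)
  obtain ⟨hφa, hφb⟩ := hφmono.monotoneOn.apply_endpoints_of_bijOn_Icc hab hab' hφ
  have hφcont := hφmono.monotoneOn.continuousOn_of_bijOn_Icc hφ
  have hφ' : ∀ x ∈ Ioo a b, HasDerivAt φ 1 x := fun x hx =>
    hF.hasDerivAt_eq_one_of_comp_eq hG hφmono hφcont hGφ hx
      (hφmono.mapsTo_Ioo_of_apply_endpoints hφa hφb hx)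
  rcases hab.eq_or_lt with rfl | hlt
  · rw [← hφa, ← hφb, sub_self, sub_self]
  · obtain ⟨c, -, hc⟩ := exists_hasDerivAt_eq_slope φ (fun _ => 1) hlt hφcont hφ'
    rw [hφa, hφb, eq_div_iff (sub_ne_zero.2 hlt.ne')] at hc
    linarith
end

section
/- Let d ≥ 2 be an integer, let a ≤ b in ℝ, and let f : ℝ → (Fin d → ℝ) be well-parametrized on [a,b] via v. Then the time component t ↦ f t 0 is either strictly increasing on Set.Icc a b or strictly decreasing on Set.Icc a b. Moreover, if it is strictly increasing on Set.Icc a b and a < b, then v x 0 ≥ 1 for every x ∈ Set.Icc a b. -/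
theorem time_component_monotone {d : ℕ} {a b : ℝ} (hab : a ≤ b)
    (f v : ℝ → Fin (d + 2) → ℝ) (hf : WellParam a b f v) :
    (StrictMonoOn (fun t => f t 0) (Set.Icc a b) ∨
      StrictAntiOn (fun t => f t 0) (Set.Icc a b)) ∧
    (StrictMonoOn (fun t => f t 0) (Set.Icc a b) → a < b →
      ∀ x ∈ Set.Icc a b, 1 ≤ v x 0) := by
  set g : ℝ → ℝ := fun t => f t 0 with hg_def
  set g' : ℝ → ℝ := fun x => v x 0 with hg'_def
  have hg : ∀ x ∈ Set.Icc a b, HasDerivWithinAt g (g' x) (Set.Icc a b) x := by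
    intro x hx
    exact hasDerivWithinAt_pi.1 (hf x hx).1 0
  have hsq : ∀ x ∈ Set.Icc a b, 1 ≤ (g' x) ^ 2 := by
    intro x hx
    have hm := (hf x hx).2
    unfold MinkUnit at hm
    have hsum : (0:ℝ) ≤ ∑ i ∈ Finset.univ.erase (0 : Fin (d + 2)), (v x i) ^ 2 :=
      Finset.sum_nonneg fun i _ => sq_nonneg _
    simp only [g', hg'_def]
    nlinarith
  have hne : ∀ x ∈ Set.Icc a b, g' x ≠ 0 := by
    intro x hx h0
    have := hsq x hx
    rw [h0] at this; norm_num at this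
  have hcont : ContinuousOn g (Set.Icc a b) := fun x hx =>
    (hg x hx).continuousWithinAt
  have hdicho := hasDerivWithinAt_forall_lt_or_forall_gt_of_forall_ne
    (convex_Icc a b) hg (m := 0) hne
  have hmono_of_pos : (∀ x ∈ Set.Icc a b, 0 < g' x) → StrictMonoOn g (Set.Icc a b) := by
    intro hpos
    exact strictMonoOn_of_hasDerivWithinAt_pos (convex_Icc a b) hcont
      (fun x hx => ((hg x (interior_subset hx)).mono interior_subset))
      (fun x hx => hpos x (interior_subset hx))
  have hanti_of_neg : (∀ x ∈ Set.Icc a b, g' x < 0) → StrictAntiOn g (Set.Icc a b) := by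
    intro hneg
    exact strictAntiOn_of_hasDerivWithinAt_neg (convex_Icc a b) hcont
      (fun x hx => ((hg x (interior_subset hx)).mono interior_subset))
      (fun x hx => hneg x (interior_subset hx))
  constructor
  · rcases hdicho with h | h
    · exact Or.inr (hanti_of_neg h)
    · exact Or.inl (hmono_of_pos h)
  · intro hmono hlt x hx
    rcases hdicho with h | h
    · exfalso
      have hanti := hanti_of_neg h
      have h1 := hmono (Set.left_mem_Icc.2 hab) (Set.right_mem_Icc.2 hab) hlt
      have h2 := hanti (Set.left_mem_Icc.2 hab) (Set.right_mem_Icc.2 hab) hlt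
      exact absurd h1 (not_lt.2 h2.le)
    · have hpos := h x hx
      have := hsq x hx
      nlinarith
end

section
/- Chain rule: let F be a linearly ordered field, n ≥ 1 an integer, h : F → F with domain D_h ⊆ F, g : F → (Fin n → F) with domain D_g ⊆ F, and x ∈ F. Suppose c ∈ F is a derivative of h at x relative to D_h, the vector w : Fin n → F is a derivative of g at h x relative to D_g, and x is an accumulation point of the set D := {y ∈ D_h : h y ∈ D_g} with x ∈ D. Then the vector c·w (i ↦ c·(w i)) is a derivative of the composite function y ↦ g (h y) at x relative to D. -/
variable {F : Type*} [Field F] [LinearOrder F] [IsStrictOrderedRing F]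

/-- `x` is an accumulation point of `D ⊆ F`. -/
def AccPoint (D : Set F) (x : F) : Prop :=
  ∀ ε : F, 0 < ε → ∃ y ∈ D, y ≠ x ∧ |y - x| < ε

/-- `c` is a derivative of `f : F → F` at `x` relative to `D`. -/
def IsDerivRel (f : F → F) (D : Set F) (x c : F) : Prop :=
  x ∈ D ∧ AccPoint D x ∧
    ∀ ε : F, 0 < ε → ∃ δ : F, 0 < δ ∧
      ∀ y ∈ D, |y - x| < δ → |f y - f x - (y - x) * c| ≤ ε * |y - x|

/-- `a` is a derivative of the vector-valued `f : F → (Fin n → F)` at `x`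
relative to `D` (Euclidean lengths compared via sums of squares). -/
def IsVDerivRel {n : ℕ} (f : F → Fin n → F) (D : Set F) (x : F) (a : Fin n → F) : Prop :=
  x ∈ D ∧ AccPoint D x ∧
    ∀ ε : F, 0 < ε → ∃ δ : F, 0 < δ ∧
      ∀ y ∈ D, |y - x| < δ →
        ∑ i, (f y i - f x i - (y - x) * a i) ^ 2 ≤ ε ^ 2 * (y - x) ^ 2

/-- The vector-valued `f : F → (Fin n → F)` is continuous at `x` relative to `D`. -/
def IsVContRel {n : ℕ} (f : F → Fin n → F) (D : Set F) (x : F) : Prop :=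
  x ∈ D ∧ AccPoint D x ∧
    ∀ ε : F, 0 < ε → ∃ δ : F, 0 < δ ∧
      ∀ y ∈ D, |y - x| < δ → ∑ i, (f y i - f x i) ^ 2 < ε ^ 2

/-- The scalar `f : F → F` is continuous at `x` relative to `D`. -/
def IsContRel (f : F → F) (D : Set F) (x : F) : Prop :=
  x ∈ D ∧ AccPoint D x ∧
    ∀ ε : F, 0 < ε → ∃ δ : F, 0 < δ ∧
      ∀ y ∈ D, |y - x| < δ → |f y - f x| < ε

/-- `F` has the least-upper-bound property. -/
def HasLUBProp (F : Type*) [Field F] [LinearOrder F] [IsStrictOrderedRing F] : Prop :=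
  ∀ S : Set F, S.Nonempty → BddAbove S → ∃ s, IsLUB S s

theorem chain_rule {F : Type*} [Field F] [LinearOrder F] [IsStrictOrderedRing F]
    {n : ℕ} (hn : 1 ≤ n) (h : F → F) (Dh : Set F) (g : F → Fin n → F) (Dg : Set F)
    (x c : F) (w : Fin n → F)
    (hc : IsDerivRel h Dh x c) (hw : IsVDerivRel g Dg (h x) w)
    (hxD : x ∈ {y ∈ Dh | h y ∈ Dg}) (hacc : AccPoint {y ∈ Dh | h y ∈ Dg} x) :
    IsVDerivRel (fun y => g (h y)) {y ∈ Dh | h y ∈ Dg} x (fun i => c * w i) := by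
  obtain ⟨hxDh, haccDh, Hc⟩ := hc
  obtain ⟨hhxDg, haccDg, Hw⟩ := hw
  refine ⟨hxD, hacc, ?_⟩
  intro ε hε
  set W : F := ∑ i, (w i) ^ 2 with hWdef
  have hW0 : 0 ≤ W := Finset.sum_nonneg fun i _ => sq_nonneg _
  clear_value W
  have hc1 : (0:F) < |c| + 1 := by positivity
  obtain ⟨δ₀, hδ₀, H0⟩ := Hc 1 one_pos
  obtain ⟨δ₁, hδ₁, H1⟩ := Hc (ε / (2 * (W + 1))) (by positivity)
  obtain ⟨δ₂, hδ₂, H2⟩ := Hw (ε / (2 * (|c| + 1))) (by positivity)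
  refine ⟨min δ₀ (min δ₁ (δ₂ / (|c| + 1))), by positivity, ?_⟩
  rintro y ⟨hyDh, hhyDg⟩ hyx
  have hy0 : |y - x| < δ₀ := lt_of_lt_of_le hyx (min_le_left _ _)
  have hy1 : |y - x| < δ₁ :=
    lt_of_lt_of_le hyx ((min_le_right _ _).trans (min_le_left _ _))
  have hy2 : |y - x| < δ₂ / (|c| + 1) :=
    lt_of_lt_of_le hyx ((min_le_right _ _).trans (min_le_right _ _))
  have hbound : |h y - h x| ≤ (|c| + 1) * |y - x| := by
    have h0 := H0 y hyDh hy0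
    calc |h y - h x| = |(h y - h x - (y - x) * c) + (y - x) * c| := by ring_nf
      _ ≤ |h y - h x - (y - x) * c| + |(y - x) * c| := abs_add_le _ _
      _ ≤ 1 * |y - x| + |y - x| * |c| := by rw [abs_mul]; linarith
      _ = (|c| + 1) * |y - x| := by ring
  have hhy2 : |h y - h x| < δ₂ := by
    calc |h y - h x| ≤ (|c| + 1) * |y - x| := hbound
      _ < (|c| + 1) * (δ₂ / (|c| + 1)) := by
          exact mul_lt_mul_of_pos_left hy2 hc1
      _ = δ₂ := by field_simp
  have HA := H2 (h y) hhyDg hhy2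
  have HB := H1 y hyDh hy1
  -- abbreviations
  set a : Fin n → F := fun i => g (h y) i - g (h x) i - (h y - h x) * w i with ha
  set b : Fin n → F := fun i => (h y - h x - (y - x) * c) * w i with hb
  have hsplit : ∀ i, g (h y) i - g (h x) i - (y - x) * (c * w i) = a i + b i := by
    intro i; simp only [ha, hb]; ring
  have hsum2 : ∑ i, (g (h y) i - g (h x) i - (y - x) * (c * w i)) ^ 2
      ≤ 2 * (∑ i, (a i) ^ 2) + 2 * (∑ i, (b i) ^ 2) := by
    calc ∑ i, (g (h y) i - g (h x) i - (y - x) * (c * w i)) ^ 2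
        ≤ ∑ i, (2 * (a i) ^ 2 + 2 * (b i) ^ 2) := by
          refine Finset.sum_le_sum fun i _ => ?_
          rw [hsplit i]
          nlinarith [sq_nonneg (a i - b i)]
      _ = 2 * (∑ i, (a i) ^ 2) + 2 * (∑ i, (b i) ^ 2) := by
          rw [Finset.sum_add_distrib, ← Finset.mul_sum, ← Finset.mul_sum]
  have hSA : ∑ i, (a i) ^ 2 ≤ (ε / (2 * (|c| + 1))) ^ 2 * (h y - h x) ^ 2 := HA
  have hSB : ∑ i, (b i) ^ 2 = (h y - h x - (y - x) * c) ^ 2 * W := by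
    rw [hWdef, Finset.mul_sum]
    refine Finset.sum_congr rfl fun i _ => ?_
    simp only [hb]; ring
  have hhxsq : (h y - h x) ^ 2 ≤ (|c| + 1) ^ 2 * (y - x) ^ 2 := by
    have h1 : (h y - h x) ^ 2 = |h y - h x| ^ 2 := (sq_abs _).symm
    have h2 : |h y - h x| ^ 2 ≤ ((|c| + 1) * |y - x|) ^ 2 := by
      apply pow_le_pow_left₀ (abs_nonneg _) hbound
    rw [h1]
    calc |h y - h x| ^ 2 ≤ ((|c| + 1) * |y - x|) ^ 2 := h2
      _ = (|c| + 1) ^ 2 * (y - x) ^ 2 := by rw [mul_pow, sq_abs]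
  have hBsq : (h y - h x - (y - x) * c) ^ 2 ≤ (ε / (2 * (W + 1))) ^ 2 * (y - x) ^ 2 := by
    have h1 : (h y - h x - (y - x) * c) ^ 2 = |h y - h x - (y - x) * c| ^ 2 := (sq_abs _).symm
    have h2 : |h y - h x - (y - x) * c| ^ 2 ≤ (ε / (2 * (W + 1)) * |y - x|) ^ 2 := by
      apply pow_le_pow_left₀ (abs_nonneg _) HB
    rw [h1]
    calc |h y - h x - (y - x) * c| ^ 2 ≤ (ε / (2 * (W + 1)) * |y - x|) ^ 2 := h2
      _ = (ε / (2 * (W + 1))) ^ 2 * (y - x) ^ 2 := by rw [mul_pow, sq_abs]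
  have hA' : ∑ i, (a i) ^ 2 ≤ (ε / (2 * (|c| + 1))) ^ 2 * ((|c| + 1) ^ 2 * (y - x) ^ 2) := by
    refine hSA.trans ?_
    exact mul_le_mul_of_nonneg_left hhxsq (by positivity)
  have hB' : ∑ i, (b i) ^ 2 ≤ (ε / (2 * (W + 1))) ^ 2 * (y - x) ^ 2 * W := by
    rw [hSB]
    exact mul_le_mul_of_nonneg_right hBsq hW0
  have key1 : (ε / (2 * (|c| + 1))) ^ 2 * ((|c| + 1) ^ 2 * (y - x) ^ 2)
      = ε ^ 2 / 4 * (y - x) ^ 2 := by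
    field_simp
    ring
  have hq : (ε / (2 * (W + 1))) ^ 2 * W ≤ ε ^ 2 / 4 := by
    rw [div_pow, div_mul_eq_mul_div, div_le_div_iff₀ (by positivity) (by norm_num)]
    have e : ε ^ 2 * (2 * (W + 1)) ^ 2 - ε ^ 2 * W * 4
        = 4 * (ε ^ 2 * (W * W)) + 4 * (ε ^ 2 * W) + 4 * ε ^ 2 := by ring
    linarith [mul_nonneg (sq_nonneg ε) (mul_nonneg hW0 hW0),
      mul_nonneg (sq_nonneg ε) hW0, sq_nonneg ε]
  have key2 : 2 * ((ε / (2 * (W + 1))) ^ 2 * (y - x) ^ 2 * W) ≤ ε ^ 2 / 2 * (y - x) ^ 2 := by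
    have h2 := mul_le_mul_of_nonneg_left hq (by positivity : (0:F) ≤ 2 * (y - x) ^ 2)
    calc 2 * ((ε / (2 * (W + 1))) ^ 2 * (y - x) ^ 2 * W)
        = 2 * (y - x) ^ 2 * ((ε / (2 * (W + 1))) ^ 2 * W) := by ring
      _ ≤ 2 * (y - x) ^ 2 * (ε ^ 2 / 4) := h2
      _ = ε ^ 2 / 2 * (y - x) ^ 2 := by ring
  calc ∑ i, (g (h y) i - g (h x) i - (y - x) * (c * w i)) ^ 2
      ≤ 2 * (∑ i, (a i) ^ 2) + 2 * (∑ i, (b i) ^ 2) := hsum2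
    _ ≤ 2 * (ε ^ 2 / 4 * (y - x) ^ 2) + ε ^ 2 / 2 * (y - x) ^ 2 := by
        rw [← key1]
        have := mul_le_mul_of_nonneg_left hA' (by norm_num : (0:F) ≤ 2)
        have h2b := mul_le_mul_of_nonneg_left hB' (by norm_num : (0:F) ≤ 2)
        linarith [key2]
    _ = ε ^ 2 * (y - x) ^ 2 := by ring
end

section
/- Differentiability of the inverse: let F be a linearly ordered field, a < b in F, and let h : F → F be strictly increasing on the open interval (a,b) (or strictly decreasing on (a,b)). Let x ∈ (a,b) and suppose c ∈ F is a derivative of h at x relative to (a,b) with c ≠ 0. Then for every function g : F → F satisfying g (h y) = y for all y ∈ (a,b), there exists c' ∈ F which is a derivative of g at h x relative to the image set h '' (a,b). -/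
variable {F : Type*} [Field F] [LinearOrder F] [IsStrictOrderedRing F]

theorem inverse_differentiable {F : Type*} [Field F] [LinearOrder F] [IsStrictOrderedRing F]
    {a b : F} (hab : a < b) (h : F → F)
    (hmono : StrictMonoOn h (Set.Ioo a b) ∨ StrictAntiOn h (Set.Ioo a b))
    (x : F) (hx : x ∈ Set.Ioo a b) (c : F)
    (hc : IsDerivRel h (Set.Ioo a b) x c) (hc0 : c ≠ 0) :
    ∀ g : F → F, (∀ y ∈ Set.Ioo a b, g (h y) = y) →
      ∃ c' : F, IsDerivRel g (h '' Set.Ioo a b) (h x) c' := by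

  intro g hg
  obtain ⟨hxI, _, hderiv⟩ := hc
  obtain ⟨hax, hxb⟩ := hx
  have hcabs : 0 < |c| := abs_pos.mpr hc0
  have hinj : ∀ y ∈ Set.Ioo a b, y ≠ x → h y ≠ h x := by
    intro y hy hyx he
    rcases hmono with hm | hm
    · exact hyx (hm.injOn hy ⟨hax, hxb⟩ he)
    · exact hyx (hm.injOn hy ⟨hax, hxb⟩ he)
  have near : ∀ r : F, 0 < r → ∃ y ∈ Set.Ioo a b, y ≠ x ∧ |y - x| < r := by
    intro r hr
    refine ⟨min (x + r/2) ((x+b)/2), ⟨?_, ?_⟩, ?_, ?_⟩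
    · exact lt_min (by linarith) (by linarith)
    · exact lt_of_le_of_lt (min_le_right _ _) (by linarith)
    · have : x < min (x + r/2) ((x+b)/2) := lt_min (by linarith) (by linarith)
      exact ne_of_gt this
    · have h1 : x < min (x + r/2) ((x+b)/2) := lt_min (by linarith) (by linarith)
      have h2 : min (x + r/2) ((x+b)/2) ≤ x + r/2 := min_le_left _ _
      rw [abs_of_pos (by linarith)]
      linarith
  -- separation lemma: points whose image is close to h x must lie in (u,v)
  have sep : ∀ u v : F, u ∈ Set.Ioo a b → v ∈ Set.Ioo a b → u < x → x < v →
      ∀ y ∈ Set.Ioo a b, |h y - h x| < min |h u - h x| |h v - h x| → u < y ∧ y < v := by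
    intro u v hu hv hux hxv y hy hcl
    constructor
    · by_contra hle
      push_neg at hle
      have key : |h u - h x| ≤ |h y - h x| := by
        rcases hmono with hm | hm
        · have h1 : h u < h x := hm hu ⟨hax, hxb⟩ hux
          have h2 : h y ≤ h u := by
            rcases eq_or_lt_of_le hle with he | hlt
            · rw [he]
            · exact le_of_lt (hm hy hu hlt)
          rw [abs_of_neg (by linarith), abs_of_neg (by linarith)]
          linarith
        · have h1 : h x < h u := hm hu ⟨hax, hxb⟩ hux
          have h2 : h u ≤ h y := by
            rcases eq_or_lt_of_le hle with he | hlt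
            · rw [he]
            · exact le_of_lt (hm hy hu hlt)
          rw [abs_of_pos (by linarith), abs_of_pos (by linarith)]
          linarith
      have := lt_of_le_of_lt key hcl
      exact absurd this (not_lt.mpr (min_le_left _ _))
    · by_contra hle
      push_neg at hle
      have key : |h v - h x| ≤ |h y - h x| := by
        rcases hmono with hm | hm
        · have h1 : h x < h v := hm ⟨hax, hxb⟩ hv hxv
          have h2 : h v ≤ h y := by
            rcases eq_or_lt_of_le hle with he | hlt
            · rw [he]
            · exact le_of_lt (hm hv hy hlt)
          rw [abs_of_pos (by linarith), abs_of_pos (by linarith)]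
          linarith
        · have h1 : h v < h x := hm ⟨hax, hxb⟩ hv hxv
          have h2 : h y ≤ h v := by
            rcases eq_or_lt_of_le hle with he | hlt
            · rw [he]
            · exact le_of_lt (hm hv hy hlt)
          rw [abs_of_neg (by linarith), abs_of_neg (by linarith)]
          linarith
      have := lt_of_le_of_lt key hcl
      exact absurd this (not_lt.mpr (min_le_right _ _))
  refine ⟨c⁻¹, ⟨x, ⟨hax, hxb⟩, rfl⟩, ?_, ?_⟩
  · -- accumulation point of the image at h x
    intro ε hε
    obtain ⟨δ₀, hδ₀, H⟩ := hderiv 1 one_pos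
    obtain ⟨y, hy, hyx, hycl⟩ := near (min δ₀ (ε / (|c| + 1)))
      (lt_min hδ₀ (div_pos hε (by linarith)))
    refine ⟨h y, ⟨y, hy, rfl⟩, hinj y hy hyx, ?_⟩
    have h1 : |y - x| < δ₀ := lt_of_lt_of_le hycl (min_le_left _ _)
    have h2 : |y - x| < ε / (|c| + 1) := lt_of_lt_of_le hycl (min_le_right _ _)
    have h3 := H y hy h1
    have h4 : |h y - h x| ≤ |h y - h x - (y - x) * c| + |(y - x) * c| := by
      calc |h y - h x| = |(h y - h x - (y - x) * c) + (y - x) * c| := by ring_nf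
        _ ≤ _ := abs_add_le _ _
    rw [abs_mul] at h4
    have h5 : |h y - h x| ≤ |y - x| * (1 + |c|) := by nlinarith [abs_nonneg (y - x)]
    calc |h y - h x| ≤ |y - x| * (1 + |c|) := h5
      _ < (ε / (|c| + 1)) * (1 + |c|) := by
          apply mul_lt_mul_of_pos_right h2 (by linarith)
      _ = ε := by rw [add_comm |c| 1]; exact div_mul_cancel₀ ε (by positivity)
  · -- main estimate
    intro ε hε
    set ε₁ : F := min (|c| / 2) (ε * c ^ 2 / 2) with hε₁def
    have hc2 : (0:F) < c ^ 2 := by positivity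
    have hε₁ : 0 < ε₁ := lt_min (by linarith) (by positivity)
    obtain ⟨δ₁, hδ₁, H⟩ := hderiv ε₁ hε₁
    set u : F := max ((a + x) / 2) (x - δ₁ / 2) with hudef
    set v : F := min ((x + b) / 2) (x + δ₁ / 2) with hvdef
    have hux : u < x := max_lt (by linarith) (by linarith)
    have hau : a < u := lt_of_lt_of_le (by linarith) (le_max_left _ _)
    have hxu : x - u ≤ δ₁ / 2 := by
      have := le_max_right ((a + x) / 2) (x - δ₁ / 2)
      linarith
    have hxv : x < v := lt_min (by linarith) (by linarith)
    have hvb : v < b := lt_of_le_of_lt (min_le_left _ _) (by linarith)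
    have hvx : v - x ≤ δ₁ / 2 := by
      have := min_le_right ((x + b) / 2) (x + δ₁ / 2)
      linarith
    have huI : u ∈ Set.Ioo a b := ⟨hau, lt_trans hux hxb⟩
    have hvI : v ∈ Set.Ioo a b := ⟨lt_trans hax hxv, hvb⟩
    have hδ' : 0 < min |h u - h x| |h v - h x| :=
      lt_min (abs_pos.mpr (sub_ne_zero.mpr (hinj u huI (ne_of_lt hux))))
        (abs_pos.mpr (sub_ne_zero.mpr (hinj v hvI (ne_of_gt hxv))))
    refine ⟨min |h u - h x| |h v - h x|, hδ', ?_⟩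
    rintro z ⟨y, hy, rfl⟩ hzcl
    rw [hg y hy, hg x ⟨hax, hxb⟩]
    obtain ⟨huy, hyv⟩ := sep u v huI hvI hux hxv y hy hzcl
    have hyx : |y - x| < δ₁ := by
      rw [abs_lt]; constructor <;> linarith
    have hkey := H y hy hyx
    -- lower bound on |h y - h x|
    have hlow : |c| / 2 * |y - x| ≤ |h y - h x| := by
      have h1 : |(y - x) * c| - |h y - h x| ≤ |h y - h x - (y - x) * c| := by
        have := abs_sub_abs_le_abs_sub ((y - x) * c) (h y - h x)
        have he : (y - x) * c - (h y - h x) = -(h y - h x - (y - x) * c) := by ring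
        rw [he, abs_neg] at this
        exact this
      rw [abs_mul] at h1
      have h2 : ε₁ ≤ |c| / 2 := min_le_left _ _
      have h3 : ε₁ * |y - x| ≤ |c| / 2 * |y - x| :=
        mul_le_mul_of_nonneg_right h2 (abs_nonneg _)
      linarith
    -- main computation
    have hmain : |y - x - (h y - h x) * c⁻¹| * |c| = |h y - h x - (y - x) * c| := by
      rw [← abs_mul]
      have he : (y - x - (h y - h x) * c⁻¹) * c = -(h y - h x - (y - x) * c) := by
        field_simp
        ring
      rw [he, abs_neg]
    have hε₁2 : ε₁ ≤ ε * c ^ 2 / 2 := min_le_right _ _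
    have hcsq : |c| * |c| = c ^ 2 := by
      rw [← sq_abs c]; ring
    -- |y - x - (hy - hx)/c| ≤ ε₁ |y-x| / |c| ≤ ε₁ * 2/c² * |hy-hx| ≤ ε |hy-hx|
    have hfin : |y - x - (h y - h x) * c⁻¹| * |c| ≤ ε * |h y - h x| * |c| := by
      rw [hmain]
      have t1 : ε₁ * |y - x| ≤ (ε * c ^ 2 / 2) * |y - x| :=
        mul_le_mul_of_nonneg_right hε₁2 (abs_nonneg _)
      have t2 : (ε * c ^ 2 / 2) * |y - x| = (ε * |c|) * (|c| / 2 * |y - x|) := by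
        rw [← hcsq]; ring
      have t3 : (ε * |c|) * (|c| / 2 * |y - x|) ≤ (ε * |c|) * |h y - h x| :=
        mul_le_mul_of_nonneg_left hlow (by positivity)
      have t4 : (ε * |c|) * |h y - h x| = ε * |h y - h x| * |c| := by ring
      linarith
      
    exact le_of_mul_le_mul_right hfin hcabs
end
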